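/- Set C = max(cos α', cos β', cos γ'); then 0 < C < 1, and whenever x, y ∈ X and s ≥ 1 follow a common itinerary for s steps (for every 0 ≤ i ≤ s there is j(i) ∈ {1,2,3} with Tⁱ(x), Tⁱ(y) ∈ L_{j(i)}, no such iterate is a vertex, and j(i+1) ≠ j(i) for i < s), one has dist(Tˢ(x), Tˢ(y)) ≤ Cˢ · dist(x, y). In particular, T contracts distances along any common itinerary at a uniform exponential rate determined only by the angles of the triangle. -/

import Mathlib

open EuclideanGeometry Filter Metric Real

noncomputable section

abbrev Pt := EuclideanSpace ℝ (Fin 2)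

/-- A line: a one-dimensional affine subspace of the plane, as a set of points. -/
def IsLine (L : Set Pt) : Prop :=
  ∃ a d : Pt, d ≠ 0 ∧ L = {p | ∃ t : ℝ, p = a + t • d}

/-- `p` is the orthogonal projection of `x` onto the line `L`:
the unique nearest point of `L` to `x` (the foot of the perpendicular). -/
def IsOrthProj (L : Set Pt) (x p : Pt) : Prop :=
  p ∈ L ∧ ∀ q ∈ L, dist x p ≤ dist x q

/-- Three pairwise nonparallel, nonconcurrent lines in the plane: each pair meets in
exactly one point, and the three intersection points `A = L₁ ∩ L₂`, `B = L₁ ∩ L₃`,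
`C = L₂ ∩ L₃` are distinct, forming a triangle `Q = △ABC`. -/
structure Config where
  L : Fin 3 → Set Pt
  A : Pt
  B : Pt
  C : Pt
  isLine : ∀ i, IsLine (L i)
  h01 : L 0 ∩ L 1 = {A}
  h02 : L 0 ∩ L 2 = {B}
  h12 : L 1 ∩ L 2 = {C}
  hAB : A ≠ B
  hAC : A ≠ C
  hBC : B ≠ C

/-- The space `X = L₁ ∪ L₂ ∪ L₃`. -/
def Config.X (cfg : Config) : Set Pt := cfg.L 0 ∪ cfg.L 1 ∪ cfg.L 2

/-- The defining properties of the piecewise map `T : X → X`: if `x` lies on exactly one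
line `Lᵢ` and `x₁, x₂` are the orthogonal projections of `x` onto the other two lines,
then `T x` is the farther projection (and `T x = x` in case of a tie); the vertices
`A, B, C` are fixed by convention. -/
def IsTMap (cfg : Config) (T : Pt → Pt) : Prop :=
  (∀ x ∈ cfg.X, T x ∈ cfg.X) ∧
  T cfg.A = cfg.A ∧ T cfg.B = cfg.B ∧ T cfg.C = cfg.C ∧
  ∀ i j k : Fin 3, i ≠ j → i ≠ k → j ≠ k →
    ∀ x ∈ cfg.L i, x ∉ cfg.L j → x ∉ cfg.L k →
      ∀ x₁ x₂ : Pt, IsOrthProj (cfg.L j) x x₁ → IsOrthProj (cfg.L k) x x₂ →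
        (dist x x₁ > dist x x₂ → T x = x₁) ∧
        (dist x x₂ > dist x x₁ → T x = x₂) ∧
        (dist x x₁ = dist x x₂ → T x = x)

/-- Replace an obtuse angle `θ > π/2` by its supplement `π − θ`. -/
def acuteVal (θ : ℝ) : ℝ := if θ > π / 2 then π - θ else θ

/-- `α'`: the (possibly supplemented) interior angle of `Q` at vertex `A`. -/
def angA (cfg : Config) : ℝ := acuteVal (∠ cfg.B cfg.A cfg.C)

/-- `β'`: the (possibly supplemented) interior angle of `Q` at vertex `B`. -/
def angB (cfg : Config) : ℝ := acuteVal (∠ cfg.A cfg.B cfg.C)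

/-- `γ'`: the (possibly supplemented) interior angle of `Q` at vertex `C`. -/
def angC (cfg : Config) : ℝ := acuteVal (∠ cfg.A cfg.C cfg.B)

/-- `C = max (cos α', cos β', cos γ')`. -/
def maxCos (cfg : Config) : ℝ :=
  max (max (Real.cos (angA cfg)) (Real.cos (angB cfg))) (Real.cos (angC cfg))

/-- `x` and `y` follow a common itinerary `j` for `s` steps: corresponding iterates lie on
the same line `L_{j i}`, no iterate up to step `s` is a vertex, and consecutive itinerary
indices differ. -/
def CommonItinerary (cfg : Config) (T : Pt → Pt) (x y : Pt) (s : ℕ) (j : ℕ → Fin 3) : Prop :=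
  (∀ i ≤ s, T^[i] x ∈ cfg.L (j i) ∧ T^[i] y ∈ cfg.L (j i)) ∧
  (∀ i ≤ s, T^[i] x ∉ ({cfg.A, cfg.B, cfg.C} : Set Pt) ∧
            T^[i] y ∉ ({cfg.A, cfg.B, cfg.C} : Set Pt)) ∧
  (∀ i < s, j (i + 1) ≠ j i)

open scoped RealInnerProductSpace

lemma key_sq (a d x : Pt) (t : ℝ) :
    ‖x - (a + t • d)‖ ^ 2
      = ‖x - (a + (⟪x - a, d⟫ / ‖d‖ ^ 2) • d)‖ ^ 2
        + (t - ⟪x - a, d⟫ / ‖d‖ ^ 2) ^ 2 * ‖d‖ ^ 2 := by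
  have expand : ∀ s : ℝ, ‖x - (a + s • d)‖ ^ 2
      = ‖x - a‖ ^ 2 - 2 * (s * ⟪x - a, d⟫) + s ^ 2 * ‖d‖ ^ 2 := by
    intro s
    have h : x - (a + s • d) = (x - a) - s • d := by abel
    rw [h, norm_sub_sq_real, real_inner_smul_right, norm_smul]
    simp [mul_pow, Real.norm_eq_abs, sq_abs]
  rw [expand, expand]
  by_cases hd : d = 0
  · simp [hd]
  · have hn : ‖d‖ ^ 2 ≠ 0 := pow_ne_zero 2 (norm_ne_zero_iff.2 hd)
    field_simp
    ring
lemma isOrthProj_foot (a d x : Pt) :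
    IsOrthProj {p | ∃ t : ℝ, p = a + t • d} x (a + (⟪x - a, d⟫ / ‖d‖ ^ 2) • d) := by
  refine ⟨⟨_, rfl⟩, ?_⟩
  rintro q ⟨t, rfl⟩
  rw [dist_eq_norm, dist_eq_norm]
  refine le_of_pow_le_pow_left₀ two_ne_zero (norm_nonneg _) ?_
  rw [key_sq a d x t]
  nlinarith [sq_nonneg (t - ⟪x - a, d⟫ / ‖d‖ ^ 2), sq_nonneg ‖d‖]

lemma isOrthProj_unique (a d : Pt) (hd : d ≠ 0) (x p : Pt)
    (h : IsOrthProj {p | ∃ t : ℝ, p = a + t • d} x p) :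
    p = a + (⟪x - a, d⟫ / ‖d‖ ^ 2) • d := by
  obtain ⟨⟨t, rfl⟩, hmin⟩ := h
  have h1 : dist x (a + t • d) ≤ dist x (a + (⟪x - a, d⟫ / ‖d‖ ^ 2) • d) :=
    hmin _ ⟨_, rfl⟩
  rw [dist_eq_norm, dist_eq_norm] at h1
  have h2 : ‖x - (a + t • d)‖ ^ 2 ≤ ‖x - (a + (⟪x - a, d⟫ / ‖d‖ ^ 2) • d)‖ ^ 2 :=
    pow_le_pow_left₀ (norm_nonneg _) h1 2
  rw [key_sq a d x t] at h2
  have hn : (0:ℝ) < ‖d‖ ^ 2 := pow_pos (norm_pos_iff.2 hd) 2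
  have h4 : (t - ⟪x - a, d⟫ / ‖d‖ ^ 2) ^ 2 * ‖d‖ ^ 2 ≤ 0 := by linarith
  have h5 : t - ⟪x - a, d⟫ / ‖d‖ ^ 2 = 0 := by
    by_contra hne
    have hpos : 0 < (t - ⟪x - a, d⟫ / ‖d‖ ^ 2) ^ 2 * ‖d‖ ^ 2 :=
      mul_pos (by positivity) hn
    linarith
  have ht : t = ⟪x - a, d⟫ / ‖d‖ ^ 2 := by linarith
  rw [ht]
lemma dist_foot (b e : Pt) (he : e ≠ 0) (p q : Pt) :
    dist (b + (⟪p - b, e⟫ / ‖e‖ ^ 2) • e) (b + (⟪q - b, e⟫ / ‖e‖ ^ 2) • e)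
      = |⟪p - q, e⟫| / ‖e‖ := by
  have h1 : (b + (⟪p - b, e⟫ / ‖e‖ ^ 2) • e) - (b + (⟪q - b, e⟫ / ‖e‖ ^ 2) • e)
      = ((⟪p - b, e⟫ - ⟪q - b, e⟫) / ‖e‖ ^ 2) • e := by
    rw [sub_div, sub_smul]; abel
  have h2 : ⟪p - b, e⟫ - ⟪q - b, e⟫ = ⟪p - q, e⟫ := by
    rw [← inner_sub_left]; congr 1; abel
  rw [dist_eq_norm, h1, h2, norm_smul, Real.norm_eq_abs, abs_div, abs_of_nonneg (by positivity : (0:ℝ) ≤ ‖e‖ ^ 2)]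
  have hne : ‖e‖ ≠ 0 := norm_ne_zero_iff.2 he
  field_simp

lemma sub_mem_line {a d p q : Pt} (hp : p ∈ {z : Pt | ∃ t : ℝ, z = a + t • d})
    (hq : q ∈ {z : Pt | ∃ t : ℝ, z = a + t • d}) :
    ∃ c : ℝ, p - q = c • d ∧ (p ≠ q → c ≠ 0) := by
  obtain ⟨t, rfl⟩ := hp
  obtain ⟨s, rfl⟩ := hq
  refine ⟨t - s, by rw [sub_smul]; abel, ?_⟩
  intro hne hc
  apply hne
  have : t = s := by linarith [sub_eq_zero.1 hc]
  rw [this]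

lemma mem_line_add_smul {a d p : Pt} (hp : p ∈ {z : Pt | ∃ t : ℝ, z = a + t • d}) (r : ℝ) :
    p + r • d ∈ {z : Pt | ∃ t : ℝ, z = a + t • d} := by
  obtain ⟨t, rfl⟩ := hp
  exact ⟨t + r, by rw [add_smul]; abel⟩

lemma dist_proj_eq (d e : Pt) (hd : d ≠ 0) (he : e ≠ 0) (c : ℝ) (b p q p' q' : Pt)
    (hpq : p - q = c • d)
    (hp' : IsOrthProj {z | ∃ t : ℝ, z = b + t • e} p p')
    (hq' : IsOrthProj {z | ∃ t : ℝ, z = b + t • e} q q') :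
    dist p' q' = (|⟪d, e⟫| / (‖d‖ * ‖e‖)) * dist p q := by
  rw [isOrthProj_unique b e he p p' hp', isOrthProj_unique b e he q q' hq',
    dist_foot b e he p q, dist_eq_norm, hpq, real_inner_smul_left, norm_smul,
    Real.norm_eq_abs, abs_mul]
  have hdn : ‖d‖ ≠ 0 := norm_ne_zero_iff.2 hd
  have hen : ‖e‖ ≠ 0 := norm_ne_zero_iff.2 he
  field_simp
lemma cos_acuteVal_eq_abs {θ : ℝ} (h0 : 0 ≤ θ) (hπ : θ ≤ π) :
    Real.cos (acuteVal θ) = |Real.cos θ| := by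
  unfold acuteVal
  split_ifs with h
  · rw [Real.cos_pi_sub, abs_of_nonpos]
    exact Real.cos_nonpos_of_pi_div_two_le_of_le (le_of_lt h) (by linarith [Real.pi_pos])
  · exact (abs_of_nonneg (Real.cos_nonneg_of_mem_Icc ⟨by linarith [Real.pi_pos], le_of_not_gt h⟩)).symm

lemma cos_acuteVal_angle (u v w d e : Pt) {c c' : ℝ} (hc : c ≠ 0) (hc' : c' ≠ 0)
    (hu : u - v = c • d) (hw : w - v = c' • e) :
    Real.cos (acuteVal (∠ u v w)) = |⟪d, e⟫| / (‖d‖ * ‖e‖) := by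
  rw [cos_acuteVal_eq_abs (EuclideanGeometry.angle_nonneg u v w) (EuclideanGeometry.angle_le_pi u v w)]
  have hang : ∠ u v w = InnerProductGeometry.angle (u - v) (w - v) := rfl
  rw [hang, InnerProductGeometry.cos_angle, hu, hw, real_inner_smul_left,
    real_inner_smul_right, norm_smul, norm_smul, Real.norm_eq_abs, Real.norm_eq_abs,
    abs_div]
  rw [abs_mul c, abs_mul c', abs_mul, abs_mul, abs_mul, abs_abs, abs_abs,
    abs_of_nonneg (norm_nonneg d), abs_of_nonneg (norm_nonneg e)]
  rw [show |c| * (|c'| * |⟪d, e⟫|) = (|c| * |c'|) * |⟪d, e⟫| by ring,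
    show |c| * ‖d‖ * (|c'| * ‖e‖) = (|c| * |c'|) * (‖d‖ * ‖e‖) by ring,
    mul_div_mul_left _ _ (by positivity : |c| * |c'| ≠ 0)]
namespace Config

variable (cfg : Config)

lemma pair_subset {i k : Fin 3} (hik : i ≠ k) {p : Pt} (hpi : p ∈ cfg.L i)
    (hpk : p ∈ cfg.L k) : p ∈ ({cfg.A, cfg.B, cfg.C} : Set Pt) := by
  have e01 : ∀ q : Pt, q ∈ cfg.L 0 → q ∈ cfg.L 1 → q = cfg.A := fun q h1 h2 => by
    have : q ∈ cfg.L 0 ∩ cfg.L 1 := ⟨h1, h2⟩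
    rwa [cfg.h01, Set.mem_singleton_iff] at this
  have e02 : ∀ q : Pt, q ∈ cfg.L 0 → q ∈ cfg.L 2 → q = cfg.B := fun q h1 h2 => by
    have : q ∈ cfg.L 0 ∩ cfg.L 2 := ⟨h1, h2⟩
    rwa [cfg.h02, Set.mem_singleton_iff] at this
  have e12 : ∀ q : Pt, q ∈ cfg.L 1 → q ∈ cfg.L 2 → q = cfg.C := fun q h1 h2 => by
    have : q ∈ cfg.L 1 ∩ cfg.L 2 := ⟨h1, h2⟩
    rwa [cfg.h12, Set.mem_singleton_iff] at this
  simp only [Set.mem_insert_iff, Set.mem_singleton_iff]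
  fin_cases i <;> fin_cases k
  · exact absurd rfl hik
  · exact Or.inl (e01 p hpi hpk)
  · exact Or.inr (Or.inl (e02 p hpi hpk))
  · exact Or.inl (e01 p hpk hpi)
  · exact absurd rfl hik
  · exact Or.inr (Or.inr (e12 p hpi hpk))
  · exact Or.inr (Or.inl (e02 p hpk hpi))
  · exact Or.inr (Or.inr (e12 p hpk hpi))
  · exact absurd rfl hik

lemma pair_vertex : ∀ i k : Fin 3, i ≠ k → ∃ v : Pt, v ∈ cfg.L i ∧ v ∈ cfg.L k ∧
    ∀ p : Pt, p ∈ cfg.L i → p ∈ cfg.L k → p = v := by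
  have key : ∀ i k : Fin 3, ∀ v : Pt, cfg.L i ∩ cfg.L k = {v} →
      ∃ v : Pt, v ∈ cfg.L i ∧ v ∈ cfg.L k ∧ ∀ p : Pt, p ∈ cfg.L i → p ∈ cfg.L k → p = v := by
    intro i k v h
    have hv : v ∈ cfg.L i ∩ cfg.L k := by rw [h]; rfl
    exact ⟨v, hv.1, hv.2, fun p h1 h2 => by
      have : p ∈ cfg.L i ∩ cfg.L k := ⟨h1, h2⟩
      rwa [h, Set.mem_singleton_iff] at this⟩
  have h10 : cfg.L 1 ∩ cfg.L 0 = {cfg.A} := by rw [Set.inter_comm]; exact cfg.h01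
  have h20 : cfg.L 2 ∩ cfg.L 0 = {cfg.B} := by rw [Set.inter_comm]; exact cfg.h02
  have h21 : cfg.L 2 ∩ cfg.L 1 = {cfg.C} := by rw [Set.inter_comm]; exact cfg.h12
  intro i k hik
  fin_cases i <;> fin_cases k
  · exact absurd rfl hik
  · exact key _ _ _ cfg.h01
  · exact key _ _ _ cfg.h02
  · exact key _ _ _ h10
  · exact absurd rfl hik
  · exact key _ _ _ cfg.h12
  · exact key _ _ _ h20
  · exact key _ _ _ h21
  · exact absurd rfl hik

lemma not_parallel {i k : Fin 3} (hik : i ≠ k) {a d b e : Pt} (he : e ≠ 0)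
    (hLi : cfg.L i = {p : Pt | ∃ t : ℝ, p = a + t • d})
    (hLk : cfg.L k = {p : Pt | ∃ t : ℝ, p = b + t • e})
    (r : ℝ) : e ≠ r • d := by
  intro hre
  obtain ⟨v, hvi, hvk, huniq⟩ := cfg.pair_vertex i k hik
  have h1 : v + e ∈ cfg.L k := by
    rw [hLk] at hvk ⊢
    simpa using mem_line_add_smul hvk 1
  have h2 : v + e ∈ cfg.L i := by
    rw [hLi] at hvi ⊢
    rw [hre]
    exact mem_line_add_smul hvi r
  have h3 := huniq _ h2 h1
  apply he
  have : v + e = v + 0 := by rw [h3, add_zero]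
  exact add_left_cancel this

lemma ratio_lt_one {i k : Fin 3} (hik : i ≠ k) {a d b e : Pt} (hd : d ≠ 0) (he : e ≠ 0)
    (hLi : cfg.L i = {p : Pt | ∃ t : ℝ, p = a + t • d})
    (hLk : cfg.L k = {p : Pt | ∃ t : ℝ, p = b + t • e}) :
    |⟪d, e⟫| / (‖d‖ * ‖e‖) < 1 := by
  have hnp : ∀ r : ℝ, e ≠ r • d := cfg.not_parallel hik he hLi hLk
  have hdn : ‖d‖ ≠ 0 := norm_ne_zero_iff.2 hd
  have h1 : ⟪d, e⟫ < ‖d‖ * ‖e‖ := by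
    refine inner_lt_norm_mul_iff_real.2 fun h => hnp (‖d‖⁻¹ * ‖e‖) ?_
    have h' := congrArg (fun z : Pt => (‖d‖⁻¹ : ℝ) • z) h
    simp only [smul_smul] at h'
    rw [inv_mul_cancel₀ hdn, one_smul] at h'
    exact h'.symm
  have h2 : ⟪d, -e⟫ < ‖d‖ * ‖-e‖ := by
    refine inner_lt_norm_mul_iff_real.2 fun h => hnp (-(‖d‖⁻¹ * ‖e‖)) ?_
    rw [norm_neg] at h
    have h' := congrArg (fun z : Pt => (‖d‖⁻¹ : ℝ) • z) h
    simp only [smul_smul] at h'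
    rw [inv_mul_cancel₀ hdn, one_smul] at h'
    rw [neg_smul, h', neg_neg]
  rw [inner_neg_right, norm_neg] at h2
  rw [div_lt_one (mul_pos (norm_pos_iff.2 hd) (norm_pos_iff.2 he))]
  exact abs_lt.2 ⟨by linarith, h1⟩

end Config
lemma cos_of_lines {a d b e v u w : Pt}
    (hv1 : v ∈ {p : Pt | ∃ t : ℝ, p = a + t • d}) (hu : u ∈ {p : Pt | ∃ t : ℝ, p = a + t • d})
    (hv2 : v ∈ {p : Pt | ∃ t : ℝ, p = b + t • e}) (hw : w ∈ {p : Pt | ∃ t : ℝ, p = b + t • e})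
    (huv : u ≠ v) (hwv : w ≠ v) :
    Real.cos (acuteVal (∠ u v w)) = |⟪d, e⟫| / (‖d‖ * ‖e‖) := by
  obtain ⟨c, hc, hcne⟩ := sub_mem_line hu hv1
  obtain ⟨c', hc', hcne'⟩ := sub_mem_line hw hv2
  exact cos_acuteVal_angle u v w d e (hcne huv) (hcne' hwv) hc hc'

namespace Config

variable (cfg : Config)

lemma A_mem0 : cfg.A ∈ cfg.L 0 := by
  have : cfg.A ∈ cfg.L 0 ∩ cfg.L 1 := by rw [cfg.h01]; rfl
  exact this.1

lemma A_mem1 : cfg.A ∈ cfg.L 1 := by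
  have : cfg.A ∈ cfg.L 0 ∩ cfg.L 1 := by rw [cfg.h01]; rfl
  exact this.2

lemma B_mem0 : cfg.B ∈ cfg.L 0 := by
  have : cfg.B ∈ cfg.L 0 ∩ cfg.L 2 := by rw [cfg.h02]; rfl
  exact this.1

lemma B_mem2 : cfg.B ∈ cfg.L 2 := by
  have : cfg.B ∈ cfg.L 0 ∩ cfg.L 2 := by rw [cfg.h02]; rfl
  exact this.2

lemma C_mem1 : cfg.C ∈ cfg.L 1 := by
  have : cfg.C ∈ cfg.L 1 ∩ cfg.L 2 := by rw [cfg.h12]; rfl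
  exact this.1

lemma C_mem2 : cfg.C ∈ cfg.L 2 := by
  have : cfg.C ∈ cfg.L 1 ∩ cfg.L 2 := by rw [cfg.h12]; rfl
  exact this.2

lemma cos_mem_maxCos_A : Real.cos (angA cfg) ≤ maxCos cfg :=
  le_max_of_le_left (le_max_left _ _)

lemma cos_mem_maxCos_B : Real.cos (angB cfg) ≤ maxCos cfg :=
  le_max_of_le_left (le_max_right _ _)

lemma cos_mem_maxCos_C : Real.cos (angC cfg) ≤ maxCos cfg :=
  le_max_right _ _

lemma ratio_le_maxCos {i k : Fin 3} (hik : i ≠ k) {a d b e : Pt}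
    (hLi : cfg.L i = {p : Pt | ∃ t : ℝ, p = a + t • d})
    (hLk : cfg.L k = {p : Pt | ∃ t : ℝ, p = b + t • e}) :
    |⟪d, e⟫| / (‖d‖ * ‖e‖) ≤ maxCos cfg := by
  have hA0 := cfg.A_mem0; have hA1 := cfg.A_mem1
  have hB0 := cfg.B_mem0; have hB2 := cfg.B_mem2
  have hC1 := cfg.C_mem1; have hC2 := cfg.C_mem2
  fin_cases i <;> fin_cases k
  · exact absurd rfl hik
  · -- L0, L1, vertex A, angle ∠ B A C = angA
    have hLi' : cfg.L 0 = {p : Pt | ∃ t : ℝ, p = a + t • d} := hLi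
    have hLk' : cfg.L 1 = {p : Pt | ∃ t : ℝ, p = b + t • e} := hLk
    rw [hLi'] at hA0 hB0; rw [hLk'] at hA1 hC1
    have h := cos_of_lines hA0 hB0 hA1 hC1 cfg.hAB.symm cfg.hAC.symm
    rw [← h]; exact cfg.cos_mem_maxCos_A
  · -- L0, L2, vertex B, angle ∠ A B C = angB
    have hLi' : cfg.L 0 = {p : Pt | ∃ t : ℝ, p = a + t • d} := hLi
    have hLk' : cfg.L 2 = {p : Pt | ∃ t : ℝ, p = b + t • e} := hLk
    rw [hLi'] at hA0 hB0; rw [hLk'] at hB2 hC2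
    have h := cos_of_lines hB0 hA0 hB2 hC2 cfg.hAB cfg.hBC.symm
    rw [← h]; exact cfg.cos_mem_maxCos_B
  · -- L1, L0, vertex A, angle ∠ C A B
    have hLi' : cfg.L 1 = {p : Pt | ∃ t : ℝ, p = a + t • d} := hLi
    have hLk' : cfg.L 0 = {p : Pt | ∃ t : ℝ, p = b + t • e} := hLk
    rw [hLi'] at hA1 hC1; rw [hLk'] at hA0 hB0
    have h := cos_of_lines hA1 hC1 hA0 hB0 cfg.hAC.symm cfg.hAB.symm
    rw [EuclideanGeometry.angle_comm] at h
    rw [← h]; exact cfg.cos_mem_maxCos_A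
  · exact absurd rfl hik
  · -- L1, L2, vertex C, angle ∠ A C B = angC
    have hLi' : cfg.L 1 = {p : Pt | ∃ t : ℝ, p = a + t • d} := hLi
    have hLk' : cfg.L 2 = {p : Pt | ∃ t : ℝ, p = b + t • e} := hLk
    rw [hLi'] at hA1 hC1; rw [hLk'] at hB2 hC2
    have h := cos_of_lines hC1 hA1 hC2 hB2 cfg.hAC cfg.hBC
    rw [← h]; exact cfg.cos_mem_maxCos_C
  · -- L2, L0, vertex B, angle ∠ C B A
    have hLi' : cfg.L 2 = {p : Pt | ∃ t : ℝ, p = a + t • d} := hLi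
    have hLk' : cfg.L 0 = {p : Pt | ∃ t : ℝ, p = b + t • e} := hLk
    rw [hLi'] at hB2 hC2; rw [hLk'] at hA0 hB0
    have h := cos_of_lines hB2 hC2 hB0 hA0 cfg.hBC.symm cfg.hAB
    rw [EuclideanGeometry.angle_comm] at h
    rw [← h]; exact cfg.cos_mem_maxCos_B
  · -- L2, L1, vertex C, angle ∠ B C A
    have hLi' : cfg.L 2 = {p : Pt | ∃ t : ℝ, p = a + t • d} := hLi
    have hLk' : cfg.L 1 = {p : Pt | ∃ t : ℝ, p = b + t • e} := hLk
    rw [hLi'] at hB2 hC2; rw [hLk'] at hA1 hC1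
    have h := cos_of_lines hC2 hB2 hC1 hA1 cfg.hBC cfg.hAC
    rw [EuclideanGeometry.angle_comm] at h
    rw [← h]; exact cfg.cos_mem_maxCos_C
  · exact absurd rfl hik

lemma maxCos_lt_one : maxCos cfg < 1 := by
  obtain ⟨a0, d0, hd0, hL0⟩ := cfg.isLine 0
  obtain ⟨a1, d1, hd1, hL1⟩ := cfg.isLine 1
  obtain ⟨a2, d2, hd2, hL2⟩ := cfg.isLine 2
  have hA0 := cfg.A_mem0; have hA1 := cfg.A_mem1
  have hB0 := cfg.B_mem0; have hB2 := cfg.B_mem2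
  have hC1 := cfg.C_mem1; have hC2 := cfg.C_mem2
  rw [hL0] at hA0 hB0; rw [hL1] at hA1 hC1; rw [hL2] at hB2 hC2
  have eA : Real.cos (angA cfg) = |⟪d0, d1⟫| / (‖d0‖ * ‖d1‖) :=
    cos_of_lines hA0 hB0 hA1 hC1 cfg.hAB.symm cfg.hAC.symm
  have eB : Real.cos (angB cfg) = |⟪d0, d2⟫| / (‖d0‖ * ‖d2‖) :=
    cos_of_lines hB0 hA0 hB2 hC2 cfg.hAB cfg.hBC.symm
  have eC : Real.cos (angC cfg) = |⟪d1, d2⟫| / (‖d1‖ * ‖d2‖) :=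
    cos_of_lines hC1 hA1 hC2 hB2 cfg.hAC cfg.hBC
  have lA : Real.cos (angA cfg) < 1 := by
    rw [eA]; exact cfg.ratio_lt_one (by decide) hd0 hd1 hL0 hL1
  have lB : Real.cos (angB cfg) < 1 := by
    rw [eB]; exact cfg.ratio_lt_one (by decide) hd0 hd2 hL0 hL2
  have lC : Real.cos (angC cfg) < 1 := by
    rw [eC]; exact cfg.ratio_lt_one (by decide) hd1 hd2 hL1 hL2
  exact max_lt (max_lt lA lB) lC

lemma maxCos_pos : 0 < maxCos cfg := by
  have hBA : cfg.B - cfg.A ≠ 0 := sub_ne_zero.2 cfg.hAB.symm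
  have hCA : cfg.C - cfg.A ≠ 0 := sub_ne_zero.2 cfg.hAC.symm
  have hCB : cfg.C - cfg.B ≠ 0 := sub_ne_zero.2 cfg.hBC.symm
  have hAB' : cfg.A - cfg.B ≠ 0 := sub_ne_zero.2 cfg.hAB
  have eA : Real.cos (angA cfg)
      = |⟪cfg.B - cfg.A, cfg.C - cfg.A⟫| / (‖cfg.B - cfg.A‖ * ‖cfg.C - cfg.A‖) :=
    cos_acuteVal_angle cfg.B cfg.A cfg.C _ _ one_ne_zero one_ne_zero
      (one_smul ℝ _).symm (one_smul ℝ _).symm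
  have eB : Real.cos (angB cfg)
      = |⟪cfg.A - cfg.B, cfg.C - cfg.B⟫| / (‖cfg.A - cfg.B‖ * ‖cfg.C - cfg.B‖) :=
    cos_acuteVal_angle cfg.A cfg.B cfg.C _ _ one_ne_zero one_ne_zero
      (one_smul ℝ _).symm (one_smul ℝ _).symm
  rcases lt_or_ge 0 (Real.cos (angA cfg)) with h | h
  · exact lt_of_lt_of_le h cfg.cos_mem_maxCos_A
  rcases lt_or_ge 0 (Real.cos (angB cfg)) with h' | h'
  · exact lt_of_lt_of_le h' cfg.cos_mem_maxCos_B
  exfalso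
  have hdenA : (0:ℝ) < ‖cfg.B - cfg.A‖ * ‖cfg.C - cfg.A‖ :=
    mul_pos (norm_pos_iff.2 hBA) (norm_pos_iff.2 hCA)
  have hdenB : (0:ℝ) < ‖cfg.A - cfg.B‖ * ‖cfg.C - cfg.B‖ :=
    mul_pos (norm_pos_iff.2 hAB') (norm_pos_iff.2 hCB)
  rw [eA] at h
  rw [eB] at h'
  have hiA : ⟪cfg.B - cfg.A, cfg.C - cfg.A⟫ = 0 := by
    have h1 : |⟪cfg.B - cfg.A, cfg.C - cfg.A⟫| ≤ 0 := by
      by_contra hcon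
      push_neg at hcon
      exact absurd h (not_le.2 (div_pos hcon hdenA))
    exact abs_eq_zero.1 (le_antisymm h1 (abs_nonneg _))
  have hiB : ⟪cfg.A - cfg.B, cfg.C - cfg.B⟫ = 0 := by
    have h1 : |⟪cfg.A - cfg.B, cfg.C - cfg.B⟫| ≤ 0 := by
      by_contra hcon
      push_neg at hcon
      exact absurd h' (not_le.2 (div_pos hcon hdenB))
    exact abs_eq_zero.1 (le_antisymm h1 (abs_nonneg _))
  have hsub : ⟪cfg.B - cfg.A, cfg.B - cfg.A⟫ = (0:ℝ) := by
    have h3 : ⟪cfg.B - cfg.A, (cfg.C - cfg.A) - (cfg.C - cfg.B)⟫ = (0:ℝ) := by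
      rw [inner_sub_right, hiA]
      have h4 : ⟪cfg.B - cfg.A, cfg.C - cfg.B⟫ = -⟪cfg.A - cfg.B, cfg.C - cfg.B⟫ := by
        rw [show cfg.B - cfg.A = -(cfg.A - cfg.B) from (neg_sub _ _).symm, inner_neg_left]
      rw [h4, hiB]; ring
    rwa [show (cfg.C - cfg.A) - (cfg.C - cfg.B) = cfg.B - cfg.A by abel] at h3
  exact hBA (inner_self_eq_zero.1 hsub)

lemma contract {i k : Fin 3} (hik : i ≠ k) {p q p' q' : Pt}
    (hp : p ∈ cfg.L i) (hq : q ∈ cfg.L i)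
    (hp' : IsOrthProj (cfg.L k) p p') (hq' : IsOrthProj (cfg.L k) q q') :
    dist p' q' ≤ maxCos cfg * dist p q := by
  obtain ⟨a, d, hd, hLi⟩ := cfg.isLine i
  obtain ⟨b, e, he, hLk⟩ := cfg.isLine k
  rw [hLi] at hp hq
  rw [hLk] at hp' hq'
  obtain ⟨c, hc, -⟩ := sub_mem_line hp hq
  rw [dist_proj_eq d e hd he c b p q p' q' hc hp' hq']
  exact mul_le_mul_of_nonneg_right (cfg.ratio_le_maxCos hik hLi hLk) dist_nonneg

lemma step_proj (T : Pt → Pt) (hT : IsTMap cfg T) {i k : Fin 3} (hik : i ≠ k)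
    {z : Pt} (hz : z ∈ cfg.L i) (hzv : z ∉ ({cfg.A, cfg.B, cfg.C} : Set Pt))
    (hTz : T z ∈ cfg.L k) (hTzv : T z ∉ ({cfg.A, cfg.B, cfg.C} : Set Pt)) :
    IsOrthProj (cfg.L k) z (T z) := by
  have hthird : ∀ i' k' : Fin 3, i' ≠ k' → ∃ m : Fin 3, m ≠ i' ∧ m ≠ k' := by decide
  obtain ⟨m, hmi, hmk⟩ := hthird i k hik
  have hzk : z ∉ cfg.L k := fun h => hzv (cfg.pair_subset hik hz h)
  have hzm : z ∉ cfg.L m := fun h => hzv (cfg.pair_subset (Ne.symm hmi) hz h)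
  obtain ⟨b, e, he, hLk⟩ := cfg.isLine k
  obtain ⟨bm, em, hem, hLm⟩ := cfg.isLine m
  have hx1 : IsOrthProj (cfg.L k) z (b + (⟪z - b, e⟫ / ‖e‖ ^ 2) • e) := by
    rw [hLk]; exact isOrthProj_foot b e z
  have hx2 : IsOrthProj (cfg.L m) z (bm + (⟪z - bm, em⟫ / ‖em‖ ^ 2) • em) := by
    rw [hLm]; exact isOrthProj_foot bm em z
  obtain ⟨h1, h2, h3⟩ :=
    hT.2.2.2.2 i k m hik (Ne.symm hmi) (Ne.symm hmk) z hz hzk hzm _ _ hx1 hx2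
  rcases lt_trichotomy (dist z (b + (⟪z - b, e⟫ / ‖e‖ ^ 2) • e))
      (dist z (bm + (⟪z - bm, em⟫ / ‖em‖ ^ 2) • em)) with hlt | heq | hgt
  · exfalso
    have hTz2 := h2 hlt
    rw [hTz2] at hTz hTzv
    exact hTzv (cfg.pair_subset hmk hx2.1 hTz)
  · exfalso
    have hTz3 := h3 heq
    rw [hTz3] at hTz
    exact hzk hTz
  · rw [h1 hgt]
    exact hx1

end Config
/-- With `C = max (cos α', cos β', cos γ')` one has `0 < C < 1`, and whenever `x, y ∈ X`
follow a common itinerary for `s ≥ 1` steps, `dist (Tˢ x) (Tˢ y) ≤ Cˢ · dist x y`: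
`T` contracts distances along any common itinerary at a uniform exponential rate
determined only by the angles of the triangle. -/
theorem uniform_contraction_along_itineraries (cfg : Config) (T : Pt → Pt)
    (hT : IsTMap cfg T) :
    0 < maxCos cfg ∧ maxCos cfg < 1 ∧
      ∀ x ∈ cfg.X, ∀ y ∈ cfg.X, ∀ s : ℕ, 1 ≤ s → ∀ j : ℕ → Fin 3,
        CommonItinerary cfg T x y s j →
          dist (T^[s] x) (T^[s] y) ≤ (maxCos cfg) ^ s * dist x y := by
  refine ⟨cfg.maxCos_pos, cfg.maxCos_lt_one, ?_⟩
  intro x _hx y _hy s _hs j hit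
  obtain ⟨hline, hvert, hne⟩ := hit
  have key : ∀ i, i ≤ s → dist (T^[i] x) (T^[i] y) ≤ maxCos cfg ^ i * dist x y := by
    intro i
    induction i with
    | zero => intro _; simp
    | succ n ih =>
      intro hns
      have hn : n ≤ s := Nat.le_of_succ_le hns
      have hlt : n < s := hns
      have hstepx : IsOrthProj (cfg.L (j (n + 1))) (T^[n] x) (T^[n + 1] x) := by
        rw [Function.iterate_succ_apply']
        exact cfg.step_proj T hT (hne n hlt).symm (hline n hn).1 (hvert n hn).1
          (by have h := (hline (n + 1) hns).1; rwa [Function.iterate_succ_apply'] at h)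
          (by have h := (hvert (n + 1) hns).1; rwa [Function.iterate_succ_apply'] at h)
      have hstepy : IsOrthProj (cfg.L (j (n + 1))) (T^[n] y) (T^[n + 1] y) := by
        rw [Function.iterate_succ_apply']
        exact cfg.step_proj T hT (hne n hlt).symm (hline n hn).2 (hvert n hn).2
          (by have h := (hline (n + 1) hns).2; rwa [Function.iterate_succ_apply'] at h)
          (by have h := (hvert (n + 1) hns).2; rwa [Function.iterate_succ_apply'] at h)
      have hc := cfg.contract (hne n hlt).symm (hline n hn).1 (hline n hn).2 hstepx hstepy
      calc dist (T^[n + 1] x) (T^[n + 1] y)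
          ≤ maxCos cfg * dist (T^[n] x) (T^[n] y) := hc
        _ ≤ maxCos cfg * (maxCos cfg ^ n * dist x y) :=
            mul_le_mul_of_nonneg_left (ih hn) (le_of_lt cfg.maxCos_pos)
        _ = maxCos cfg ^ (n + 1) * dist x y := by ring
  exact key s le_rfl
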